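/- arXiv:1907.02710 — 5 statements merged into one kernel-verified Lean document; each statement's English description precedes it below -/
import Mathlib

section
/- Let θ = 1, α > 0, t₀ > 0, γ ∈ [1,2] and m ∈ (0, 2γ/(γ+2)). Let x : [t₀, ∞) → ℝⁿ be a solution of the perturbed inertial ODE with damping α/t. Assume that ∫_{t₀}^∞ t^{mα} ‖g(t)‖ dt < ∞ and that F satisfies hypotheses H1(γ) and H2(2) and admits a unique minimizer x*. Then there exist C > 0 and t₁ ≥ t₀ such that for all t ≥ t₁, F(x(t)) − F* ≤ C · t^{−mα}. -/
/-!
Along a solution consider the energy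
`E(t) = t^λ (F(x) - F⋆ + ‖x'‖²/2) + a t^(λ-1) ⟪x - x⋆, x'⟫ + a (α + 1 - λ)/2 · t^(λ-2) ‖x - x⋆‖²`.
Its derivative is `t^(λ-1) (λ (F(x) - F⋆) + (λ/2 - α + a) ‖x'‖² - a ⟪∇F(x), x - x⋆⟫)`, plus
a nonnegative multiple of `(λ - 2) t^(λ-3) ‖x - x⋆‖²` and terms linear in `g`.

For a small exponent `λ` and `λ ≤ a ≤ α - λ/2`, convexity (`F(x) - F⋆ ≤ ⟪∇F(x), x - x⋆⟫`) makes
the first two terms nonpositive, and the coercivity of `E` bounds the perturbation by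
`C t^(mα) ‖g‖ (1 + E)`; Grönwall's lemma then bounds `E`. Hence `F(x(t)) → F⋆` and `x'` is bounded,
and convexity together with quadratic growth forces `x(t) → x⋆`, so that H1(γ) and H2(2) hold along
the trajectory for large `t`. With `λ = mα` and `λ/γ < a ≤ α - λ/2` (possible exactly when
`m < 2γ/(γ+2)`), H1 bounds the first term by `-(aγ - λ) t^(λ-1) (F(x) - F⋆)`, which absorbs the
second one by H2 once `t` is large. So `E' ≤ const · t^(mα) ‖g‖` is integrable, `E` is bounded, and
H2 gives `E(t) ≥ t^(mα) (F(x(t)) - F⋆) / 2`.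
-/

open MeasureTheory Set Filter Topology
open scoped RealInnerProductSpace

section Convexity

variable {E : Type*} [NormedAddCommGroup E] [InnerProductSpace ℝ E] [CompleteSpace E]
  {F : E → ℝ}

theorem ConvexOn.sub_le_inner_gradient (hconv : ConvexOn ℝ univ F) {y : E}
    (hF : DifferentiableAt ℝ F y) (z : E) : F y - F z ≤ ⟪gradient F y, y - z⟫ := by
  have hline : HasDerivAt (F ∘ AffineMap.lineMap y z) ⟪gradient F y, z - y⟫ (0 : ℝ) := by
    have hF' : HasFDerivAt F (InnerProductSpace.toDual ℝ E (gradient F y))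
        ((AffineMap.lineMap y z : ℝ →ᵃ[ℝ] E) 0) := by
      rw [AffineMap.lineMap_apply_zero]; exact hF.hasGradientAt.hasFDerivAt
    simpa using hF'.comp_hasDerivAt 0 AffineMap.hasDerivAt_lineMap
  have hslope := (hconv.comp_affineMap (AffineMap.lineMap y z)).le_slope_of_hasDerivAt
    (mem_univ 0) (mem_univ 1) one_pos hline
  simp only [slope_def_field, Function.comp_apply, AffineMap.lineMap_apply_one,
    AffineMap.lineMap_apply_zero, sub_zero, div_one] at hslope
  rw [← neg_sub z y, inner_neg_right]
  linarith

end Convexity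

section QuadraticGrowth

variable {E : Type*} [NormedAddCommGroup E] [NormedSpace ℝ E] {F : E → ℝ} {xstar : E} {K ε : ℝ}

theorem ConvexOn.mul_sq_le_sub_of_le_norm_sub (hconv : ConvexOn ℝ univ F)
    (hmin : ∀ y, F xstar ≤ F y)
    (hgrowth : ∀ y, ‖y - xstar‖ < ε → K * ‖y - xstar‖ ^ 2 ≤ F y - F xstar)
    {ρ : ℝ} (hρ : 0 < ρ) (hρε : ρ < ε) {y : E} (hy : ρ ≤ ‖y - xstar‖) :
    K * ρ ^ 2 ≤ F y - F xstar := by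
  have hnorm : 0 < ‖y - xstar‖ := hρ.trans_le hy
  set τ := ρ / ‖y - xstar‖
  have hτ0 : 0 < τ := div_pos hρ hnorm
  have hτ1 : τ ≤ 1 := (div_le_one hnorm).2 hy
  have hz : ‖(xstar + τ • (y - xstar)) - xstar‖ = ρ := by
    rw [add_sub_cancel_left, norm_smul, Real.norm_of_nonneg hτ0.le, div_mul_cancel₀ _ hnorm.ne']
  have hconvex : F (xstar + τ • (y - xstar)) ≤ (1 - τ) * F xstar + τ * F y := by
    have h := hconv.2 (mem_univ xstar) (mem_univ y) (sub_nonneg.2 hτ1) hτ0.le (by ring)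
    rwa [smul_eq_mul, smul_eq_mul, show (1 - τ) • xstar + τ • y = xstar + τ • (y - xstar) by
      module] at h
  have hgrow := hgrowth _ (hz ▸ hρε)
  rw [hz] at hgrow
  nlinarith [hmin y]

theorem ConvexOn.tendsto_nhds_of_tendsto_apply (hconv : ConvexOn ℝ univ F)
    (hmin : ∀ y, F xstar ≤ F y) (hK : 0 < K) (hε : 0 < ε)
    (hgrowth : ∀ y, ‖y - xstar‖ < ε → K * ‖y - xstar‖ ^ 2 ≤ F y - F xstar)
    {ι : Type*} {l : Filter ι} {u : ι → E} (hu : Tendsto (fun i ↦ F (u i)) l (𝓝 (F xstar))) :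
    Tendsto u l (𝓝 xstar) := by
  rw [Metric.tendsto_nhds]
  intro r hr
  obtain ⟨ρ, hρ, hρr, hρε⟩ : ∃ ρ, 0 < ρ ∧ ρ < r ∧ ρ < ε :=
    ⟨min r ε / 2, by positivity, by linarith [min_le_left r ε], by linarith [min_le_right r ε]⟩
  filter_upwards [hu.eventually_lt_const (lt_add_of_pos_right _ (by positivity : 0 < K * ρ ^ 2))]
    with i hi
  rw [dist_eq_norm]
  by_contra! hfar
  have := hconv.mul_sq_le_sub_of_le_norm_sub hmin hgrowth hρ hρε (hρr.le.trans hfar)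
  linarith

end QuadraticGrowth

section Integration

variable {φ ψ : ℝ → ℝ} {T : ℝ}

theorem le_add_setIntegral_Ici_of_hasDerivAt_le
    (hφ : ∀ t ∈ Ici T, ∃ d, HasDerivAt φ d t ∧ d ≤ ψ t)
    (hψ : IntegrableOn ψ (Ici T)) (hψ0 : ∀ t ∈ Ici T, 0 ≤ ψ t) {t : ℝ} (ht : t ∈ Ici T) :
    φ t ≤ φ T + ∫ s in Ici T, ψ s := by
  choose! d hd hdψ using hφ
  have hIcc : Icc T t ⊆ Ici T := Icc_subset_Ici_self
  have hftc : φ t - φ T ≤ ∫ s in T..t, ψ s :=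
    intervalIntegral.sub_le_integral_of_hasDeriv_right_of_le ht
      (fun s hs ↦ (hd s (hIcc hs)).continuousAt.continuousWithinAt)
      (fun s hs ↦ (hd s (hIcc (Ioo_subset_Icc_self hs))).hasDerivWithinAt)
      (hψ.mono_set hIcc) (fun s hs ↦ hdψ s (hIcc (Ioo_subset_Icc_self hs)))
  have htail : ∫ s in T..t, ψ s ≤ ∫ s in Ici T, ψ s := by
    rw [intervalIntegral.integral_of_le ht]
    exact setIntegral_mono_set hψ ((ae_restrict_iff' measurableSet_Ici).2 (ae_of_all _ hψ0))
      (Ioc_subset_Icc_self.trans hIcc).eventuallyLE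
  linarith

theorem one_add_le_mul_exp_setIntegral_of_hasDerivAt_le
    (hφ : ∀ t ∈ Ici T, ∃ d, HasDerivAt φ d t ∧ d ≤ ψ t * (1 + φ t))
    (hφ0 : ∀ t ∈ Ici T, 0 ≤ φ t)
    (hψ : IntegrableOn ψ (Ici T)) (hψ0 : ∀ t ∈ Ici T, 0 ≤ ψ t) {t : ℝ} (ht : t ∈ Ici T) :
    1 + φ t ≤ (1 + φ T) * Real.exp (∫ s in Ici T, ψ s) := by
  have hpos : ∀ s ∈ Ici T, 0 < 1 + φ s := fun s hs ↦ by linarith [hφ0 s hs]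
  have hlog : ∀ s ∈ Ici T, ∃ d, HasDerivAt (fun r ↦ Real.log (1 + φ r)) d s ∧ d ≤ ψ s := by
    intro s hs
    obtain ⟨d, hd, hdψ⟩ := hφ s hs
    exact ⟨d / (1 + φ s), (hd.const_add 1).log (hpos s hs).ne',
      (div_le_iff₀ (hpos s hs)).2 hdψ⟩
  have h := le_add_setIntegral_Ici_of_hasDerivAt_le hlog hψ hψ0 ht
  calc 1 + φ t = Real.exp (Real.log (1 + φ t)) := (Real.exp_log (hpos t ht)).symm
    _ ≤ Real.exp (Real.log (1 + φ T) + ∫ s in Ici T, ψ s) := Real.exp_le_exp.2 h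
    _ = (1 + φ T) * Real.exp (∫ s in Ici T, ψ s) := by
      rw [Real.exp_add, Real.exp_log (hpos T self_mem_Ici)]

end Integration

theorem le_mul_rpow_neg_of_rpow_mul_le {t lam f M : ℝ} (ht : 0 < t) (h : t ^ lam * f ≤ M) :
    f ≤ M * t ^ (-lam) := by
  rwa [Real.rpow_neg ht.le, ← div_eq_mul_inv, le_div_iff₀ (Real.rpow_pos_of_pos ht _), mul_comm]

theorem exists_pos_forall_le_mul_rpow_neg {f : ℝ → ℝ} {lam M : ℝ} (t₀ : ℝ)
    (h : ∀ᶠ t in atTop, t ^ lam * f t ≤ M) :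
    ∃ C > 0, ∃ t₁ ≥ t₀, ∀ t ≥ t₁, f t ≤ C * t ^ (-lam) := by
  obtain ⟨T, hT⟩ := eventually_atTop.1 (h.and (eventually_gt_atTop 0))
  refine ⟨max M 1, by positivity, max T t₀, le_max_right _ _, fun t ht ↦ ?_⟩
  obtain ⟨hbound, htpos⟩ := hT t ((le_max_left _ _).trans ht)
  exact (le_mul_rpow_neg_of_rpow_mul_le htpos hbound).trans
    (mul_le_mul_of_nonneg_right (le_max_left _ _) (Real.rpow_nonneg htpos.le _))

section QuadraticForm

variable {E : Type*} [NormedAddCommGroup E] [InnerProductSpace ℝ E]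

theorem mul_add_le_half_norm_sq_add_inner {a μ : ℝ} (hμ : a ^ 2 < μ) (p w : E) :
    (μ - a ^ 2) / (2 * (1 + μ)) * (‖w‖ ^ 2 + ‖p‖ ^ 2)
      ≤ ‖w‖ ^ 2 / 2 + a * ⟪p, w⟫ + μ / 2 * ‖p‖ ^ 2 := by
  set c := (μ - a ^ 2) / (2 * (1 + μ))
  have hμ1 : 0 < 1 + μ := by nlinarith [sq_nonneg a]
  have h2c : 2 * c = (μ - a ^ 2) / (1 + μ) := by simp only [c]; field_simp
  have hc1 : 0 < 1 - 2 * c := by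
    rw [h2c, sub_pos, div_lt_one hμ1]; nlinarith [sq_nonneg a]
  have hdisc : 0 ≤ (1 - 2 * c) * (μ - 2 * c) - |a| ^ 2 := by
    have : (1 - 2 * c) * (μ - 2 * c) - |a| ^ 2 = (μ - a ^ 2) ^ 2 / (1 + μ) ^ 2 := by
      rw [h2c, sq_abs]; field_simp; ring
    rw [this]; positivity
  have hcs : -(|a| * (‖p‖ * ‖w‖)) ≤ a * ⟪p, w⟫ := by
    have : |a * ⟪p, w⟫| ≤ |a| * (‖p‖ * ‖w‖) := by
      rw [abs_mul]; exact mul_le_mul_of_nonneg_left (abs_real_inner_le_norm p w) (abs_nonneg a)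
    linarith [neg_abs_le (a * ⟪p, w⟫)]
  have hform : 0 ≤ (1 - 2 * c) * ‖w‖ ^ 2 - 2 * |a| * (‖p‖ * ‖w‖) + (μ - 2 * c) * ‖p‖ ^ 2 := by
    have hsq : (1 - 2 * c) * ((1 - 2 * c) * ‖w‖ ^ 2 - 2 * |a| * (‖p‖ * ‖w‖) + (μ - 2 * c) * ‖p‖ ^ 2)
        = ((1 - 2 * c) * ‖w‖ - |a| * ‖p‖) ^ 2
          + ((1 - 2 * c) * (μ - 2 * c) - |a| ^ 2) * ‖p‖ ^ 2 := by
      ring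
    have : 0 ≤ (1 - 2 * c) * ((1 - 2 * c) * ‖w‖ ^ 2 - 2 * |a| * (‖p‖ * ‖w‖)
        + (μ - 2 * c) * ‖p‖ ^ 2) := by
      rw [hsq]; exact add_nonneg (sq_nonneg _) (mul_nonneg hdisc (sq_nonneg _))
    exact nonneg_of_mul_nonneg_right this hc1
  nlinarith [hform, hcs]

theorem neg_mul_norm_sq_le_norm_sq_add_inner (a : ℝ) (p w : E) :
    -(a ^ 2 * ‖p‖ ^ 2) ≤ ‖w‖ ^ 2 + 2 * a * ⟪p, w⟫ := by
  have h := norm_add_sq_real w (a • p)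
  rw [norm_smul, real_inner_smul_right, real_inner_comm, Real.norm_eq_abs, mul_pow, sq_abs] at h
  nlinarith [sq_nonneg ‖w + a • p‖]

end QuadraticForm

section Lyapunov

variable {E : Type*} [NormedAddCommGroup E] [InnerProductSpace ℝ E]
  {F : E → ℝ} {α t₀ : ℝ} {g x x' x'' : ℝ → E}

/-- The coefficient `a (α + 1 - λ)` of the last term is the one for which the terms in
`⟪x - x⋆, x'⟫` cancel in the derivative along a solution. -/
noncomputable def lyapunovEnergy (F : E → ℝ) (xstar : E) (x x' : ℝ → E) (α lam a t : ℝ) : ℝ :=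
  t ^ lam * (F (x t) - F xstar + ‖x' t‖ ^ 2 / 2) + a * t ^ (lam - 1) * ⟪x t - xstar, x' t⟫
    + a * (α + 1 - lam) / 2 * t ^ (lam - 2) * ‖x t - xstar‖ ^ 2

theorem lyapunovEnergy_eq (xstar : E) (α lam a : ℝ) {t : ℝ} (ht : 0 < t) :
    lyapunovEnergy F xstar x x' α lam a t = t ^ lam * (F (x t) - F xstar)
      + (‖t ^ (lam / 2) • x' t‖ ^ 2 / 2
        + a * ⟪t ^ (lam / 2 - 1) • (x t - xstar), t ^ (lam / 2) • x' t⟫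
        + a * (α + 1 - lam) / 2 * ‖t ^ (lam / 2 - 1) • (x t - xstar)‖ ^ 2) := by
  have h1 : t ^ lam = t ^ (lam / 2) * t ^ (lam / 2) := by rw [← Real.rpow_add ht]; ring_nf
  have h2 : t ^ (lam - 1) = t ^ (lam / 2 - 1) * t ^ (lam / 2) := by
    rw [← Real.rpow_add ht]; ring_nf
  have h3 : t ^ (lam - 2) = t ^ (lam / 2 - 1) * t ^ (lam / 2 - 1) := by
    rw [← Real.rpow_add ht]; ring_nf
  simp only [lyapunovEnergy, norm_smul, real_inner_smul_left, real_inner_smul_right,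
    Real.norm_of_nonneg (Real.rpow_nonneg ht.le _), h1, h2, h3]
  ring

theorem exists_pos_forall_mul_add_le_lyapunovEnergy (xstar : E) {lam a : ℝ}
    (hμ : a ^ 2 < a * (α + 1 - lam)) :
    ∃ c > 0, ∀ t > 0, t ^ lam * (F (x t) - F xstar)
        + c * ((t ^ (lam / 2) * ‖x' t‖) ^ 2 + (t ^ (lam / 2 - 1) * ‖x t - xstar‖) ^ 2)
      ≤ lyapunovEnergy F xstar x x' α lam a t := by
  refine ⟨(a * (α + 1 - lam) - a ^ 2) / (2 * (1 + a * (α + 1 - lam))),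
    div_pos (by linarith) (by nlinarith [sq_nonneg a]), fun t ht ↦ ?_⟩
  have h := mul_add_le_half_norm_sq_add_inner hμ (t ^ (lam / 2 - 1) • (x t - xstar))
    (t ^ (lam / 2) • x' t)
  rw [lyapunovEnergy_eq xstar α lam a ht]
  simp only [norm_smul, Real.norm_of_nonneg (Real.rpow_nonneg ht.le _)] at h ⊢
  linarith

theorem rpow_mul_sub_le_two_mul_lyapunovEnergy (xstar : E) {lam a K t : ℝ} (ht : 0 < t)
    (hμ : 0 ≤ a * (α + 1 - lam)) (hK : K * ‖x t - xstar‖ ^ 2 ≤ F (x t) - F xstar)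
    (haK : a ^ 2 ≤ K * t ^ 2) :
    t ^ lam * (F (x t) - F xstar) ≤ 2 * lyapunovEnergy F xstar x x' α lam a t := by
  rw [lyapunovEnergy_eq xstar α lam a ht]
  set P := t ^ (lam / 2 - 1) • (x t - xstar)
  have hsq := neg_mul_norm_sq_le_norm_sq_add_inner a P (t ^ (lam / 2) • x' t)
  have hP : a ^ 2 * ‖P‖ ^ 2 ≤ t ^ lam * (F (x t) - F xstar) := by
    have hpow : (t ^ (lam / 2 - 1)) ^ 2 * t ^ 2 = t ^ lam := by
      rw [← Real.rpow_natCast, ← Real.rpow_natCast, ← Real.rpow_mul ht.le, ← Real.rpow_add ht]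
      ring_nf
    calc a ^ 2 * ‖P‖ ^ 2 = a ^ 2 * ((t ^ (lam / 2 - 1)) ^ 2 * ‖x t - xstar‖ ^ 2) := by
          rw [norm_smul, Real.norm_of_nonneg (Real.rpow_nonneg ht.le _), mul_pow]
      _ ≤ K * t ^ 2 * ((t ^ (lam / 2 - 1)) ^ 2 * ‖x t - xstar‖ ^ 2) :=
          mul_le_mul_of_nonneg_right haK (by positivity)
      _ = (t ^ (lam / 2 - 1)) ^ 2 * t ^ 2 * (K * ‖x t - xstar‖ ^ 2) := by ring
      _ ≤ t ^ lam * (F (x t) - F xstar) := by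
          rw [hpow]; exact mul_le_mul_of_nonneg_left hK (Real.rpow_nonneg ht.le _)
  nlinarith [mul_nonneg hμ (sq_nonneg ‖P‖)]

variable [CompleteSpace E]

structure IsInertialSolution (F : E → ℝ) (α t₀ : ℝ) (g x x' x'' : ℝ → E) : Prop where
  hasDerivAt : ∀ t ∈ Ici t₀, HasDerivAt x (x' t) t
  hasDerivAt_deriv : ∀ t ∈ Ici t₀, HasDerivAt x' (x'' t) t
  ode : ∀ t ∈ Ici t₀, x'' t + (α / t) • x' t + gradient F (x t) = g t

theorem IsInertialSolution.mono (hx : IsInertialSolution F α t₀ g x x' x'') {t₁ : ℝ}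
    (h : t₀ ≤ t₁) : IsInertialSolution F α t₁ g x x' x'' where
  hasDerivAt t ht := hx.hasDerivAt t (Ici_subset_Ici.2 h ht)
  hasDerivAt_deriv t ht := hx.hasDerivAt_deriv t (Ici_subset_Ici.2 h ht)
  ode t ht := hx.ode t (Ici_subset_Ici.2 h ht)

theorem IsInertialSolution.hasDerivAt_lyapunovEnergy (hx : IsInertialSolution F α t₀ g x x' x'')
    {t : ℝ} (ht : t ∈ Ici t₀) (htpos : 0 < t) (hF : DifferentiableAt ℝ F (x t))
    (xstar : E) (lam a : ℝ) :
    HasDerivAt (lyapunovEnergy F xstar x x' α lam a)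
      (t ^ (lam - 1) * (lam * (F (x t) - F xstar) + (lam / 2 - α + a) * ‖x' t‖ ^ 2
          - a * ⟪gradient F (x t), x t - xstar⟫)
        + a * (α + 1 - lam) / 2 * (lam - 2) * t ^ (lam - 3) * ‖x t - xstar‖ ^ 2
        + t ^ lam * ⟪x' t, g t⟫ + a * t ^ (lam - 1) * ⟪x t - xstar, g t⟫) t := by
  have hxt := hx.hasDerivAt t ht
  have hx't := hx.hasDerivAt_deriv t ht
  have hFx : HasDerivAt (fun s ↦ F (x s)) ⟪gradient F (x t), x' t⟫ t := by
    have h := hF.hasGradientAt.hasFDerivAt.comp_hasDerivAt t hxt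
    rwa [InnerProductSpace.toDual_apply_apply] at h
  have hp : HasDerivAt (fun s ↦ x s - xstar) (x' t) t := hxt.sub_const xstar
  have hpow : ∀ κ : ℝ, HasDerivAt (fun s : ℝ ↦ s ^ κ) (κ * t ^ (κ - 1)) t :=
    fun κ ↦ Real.hasDerivAt_rpow_const (Or.inl htpos.ne')
  have h := (((hpow lam).mul ((hFx.sub_const (F xstar)).add (hx't.norm_sq.div_const 2))).add
    (((hpow (lam - 1)).mul (hp.inner ℝ hx't)).const_mul a)).add
    (((hpow (lam - 2)).mul hp.norm_sq).const_mul (a * (α + 1 - lam) / 2))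
  have heq : lyapunovEnergy F xstar x x' α lam a = fun s ↦
      s ^ lam * (F (x s) - F xstar + ‖x' s‖ ^ 2 / 2) + a * (s ^ (lam - 1) * ⟪x s - xstar, x' s⟫)
        + a * (α + 1 - lam) / 2 * (s ^ (lam - 2) * ‖x s - xstar‖ ^ 2) := by
    ext s; simp only [lyapunovEnergy]; ring
  rw [heq]
  refine h.congr_deriv ?_
  have hx'' : x'' t = g t - (α / t) • x' t - gradient F (x t) := by
    rw [← hx.ode t ht]; abel
  have hpow1 : t ^ (lam - 2) = t ^ (lam - 3) * t := by
    rw [← Real.rpow_add_one htpos.ne']; ring_nf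
  have hpow2 : t ^ (lam - 1) = t ^ (lam - 3) * t * t := by
    rw [← hpow1, ← Real.rpow_add_one htpos.ne']; ring_nf
  have hpow3 : t ^ lam = t ^ (lam - 3) * t * t * t := by
    rw [← hpow2, ← Real.rpow_add_one htpos.ne']; ring_nf
  rw [hx'', show lam - 1 - 1 = lam - 2 by ring, show lam - 2 - 1 = lam - 3 by ring]
  simp only [Pi.add_apply, inner_sub_right, real_inner_smul_right, real_inner_self_eq_norm_sq,
    real_inner_comm (x' t) (gradient F (x t)), real_inner_comm (x t - xstar) (gradient F (x t))]
  rw [hpow2, hpow3, hpow1]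
  field_simp
  ring

theorem IsInertialSolution.exists_hasDerivAt_lyapunovEnergy_le
    (hx : IsInertialSolution F α t₀ g x x' x'') {t : ℝ} (ht : t ∈ Ici t₀) (htpos : 0 < t)
    (hF : DifferentiableAt ℝ F (x t)) (xstar : E) {lam a κ : ℝ} (ha : 0 ≤ a)
    (haα : a ≤ α - lam / 2)
    (hκ : κ * (F (x t) - F xstar) ≤ a * ⟪gradient F (x t), x t - xstar⟫) :
    ∃ d, HasDerivAt (lyapunovEnergy F xstar x x' α lam a) d t ∧
      d ≤ (lam - κ) * t ^ (lam - 1) * (F (x t) - F xstar)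
        + a * (α + 1 - lam) / 2 * (lam - 2) * t ^ (lam - 3) * ‖x t - xstar‖ ^ 2
        + (t ^ lam * ‖x' t‖ + a * t ^ (lam - 1) * ‖x t - xstar‖) * ‖g t‖ := by
  refine ⟨_, hx.hasDerivAt_lyapunovEnergy ht htpos hF xstar lam a, ?_⟩
  have hpow : 0 < t ^ (lam - 1) := Real.rpow_pos_of_pos htpos _
  have hdamp : t ^ (lam - 1) * ((lam / 2 - α + a) * ‖x' t‖ ^ 2) ≤ 0 :=
    mul_nonpos_of_nonneg_of_nonpos hpow.le
      (mul_nonpos_of_nonpos_of_nonneg (by linarith) (sq_nonneg _))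
  have hgrad := mul_le_mul_of_nonneg_left hκ hpow.le
  have hg₁ := mul_le_mul_of_nonneg_left (real_inner_le_norm (x' t) (g t))
    (Real.rpow_nonneg htpos.le lam)
  have hg₂ := mul_le_mul_of_nonneg_left (real_inner_le_norm (x t - xstar) (g t))
    (mul_nonneg ha hpow.le)
  linarith

theorem IsInertialSolution.exists_hasDerivAt_lyapunovEnergy_le_mul_one_add
    (hx : IsInertialSolution F α t₀ g x x' x'') (hF : Differentiable ℝ F) (ht₀ : 1 ≤ t₀)
    (xstar : E) (hgap : ∀ t ∈ Ici t₀, 0 ≤ F (x t) - F xstar)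
    (hgrad : ∀ t ∈ Ici t₀, F (x t) - F xstar ≤ ⟪gradient F (x t), x t - xstar⟫)
    {lam a β : ℝ} (hlam : 0 < lam) (hlam2 : lam < 2) (ha : lam ≤ a) (haα : a ≤ α - lam / 2)
    (hβ : lam / 2 ≤ β) :
    ∃ C, 0 ≤ C ∧ ∀ t ∈ Ici t₀, ∃ d, HasDerivAt (lyapunovEnergy F xstar x x' α lam a) d t
      ∧ d ≤ C * (t ^ β * ‖g t‖) * (1 + lyapunovEnergy F xstar x x' α lam a t) := by
  have hμ : a ^ 2 < a * (α + 1 - lam) := by nlinarith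
  obtain ⟨c, hc, hcoer⟩ :=
    exists_pos_forall_mul_add_le_lyapunovEnergy (F := F) (x := x) (x' := x') xstar hμ
  have ha0 : 0 < a := hlam.trans_le ha
  refine ⟨(1 + a) / 2 * (1 + 1 / c), mul_nonneg (by linarith) (by positivity), fun t ht ↦ ?_⟩
  have ht1 : 1 ≤ t := ht₀.trans ht
  have htpos : 0 < t := one_pos.trans_le ht1
  obtain ⟨d, hd, hdle⟩ := hx.exists_hasDerivAt_lyapunovEnergy_le ht htpos (hF _) xstar
    ha0.le haα (mul_le_mul_of_nonneg_left (hgrad t ht) ha0.le)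
  refine ⟨d, hd, ?_⟩
  set Φ := lyapunovEnergy F xstar x x' α lam a t
  set u := t ^ (lam / 2) * ‖x' t‖
  set v := t ^ (lam / 2 - 1) * ‖x t - xstar‖
  have hcoer := hcoer t htpos
  have hf : 0 ≤ t ^ lam * (F (x t) - F xstar) := mul_nonneg (by positivity) (hgap t ht)
  have hfriction : (lam - a) * t ^ (lam - 1) * (F (x t) - F xstar) ≤ 0 :=
    mul_nonpos_of_nonpos_of_nonneg
      (mul_nonpos_of_nonpos_of_nonneg (by linarith) (by positivity)) (hgap t ht)
  have hcurv : a * (α + 1 - lam) / 2 * (lam - 2) * t ^ (lam - 3) * ‖x t - xstar‖ ^ 2 ≤ 0 :=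
    mul_nonpos_of_nonpos_of_nonneg (mul_nonpos_of_nonpos_of_nonneg
      (mul_nonpos_of_nonneg_of_nonpos (by nlinarith) (by linarith)) (by positivity)) (by positivity)
  have hsplit : t ^ lam * ‖x' t‖ + a * t ^ (lam - 1) * ‖x t - xstar‖
      = t ^ (lam / 2) * (u + a * v) := by
    have h1 : t ^ lam = t ^ (lam / 2) * t ^ (lam / 2) := by rw [← Real.rpow_add htpos]; ring_nf
    have h2 : t ^ (lam - 1) = t ^ (lam / 2) * t ^ (lam / 2 - 1) := by
      rw [← Real.rpow_add htpos]; ring_nf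
    rw [h1, h2]; ring
  have hquad : u + a * v ≤ (1 + a) / 2 * (1 + 1 / c) * (1 + Φ) := by
    have huv : u ^ 2 + v ^ 2 ≤ Φ / c := by rw [le_div_iff₀ hc]; linarith
    have hΦ : 0 ≤ Φ := by nlinarith
    calc u + a * v ≤ (1 + a) / 2 * (1 + (u ^ 2 + v ^ 2)) := by
          nlinarith [sq_nonneg (u - 1), sq_nonneg (v - 1), sq_nonneg v, sq_nonneg u]
      _ ≤ (1 + a) / 2 * ((1 + 1 / c) * (1 + Φ)) := by
          refine mul_le_mul_of_nonneg_left ?_ (by linarith)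
          rw [div_eq_mul_one_div Φ c] at huv; nlinarith [div_pos one_pos hc]
      _ = (1 + a) / 2 * (1 + 1 / c) * (1 + Φ) := by ring
  calc d ≤ t ^ (lam / 2) * (u + a * v) * ‖g t‖ := by rw [← hsplit]; linarith
    _ ≤ t ^ β * ((1 + a) / 2 * (1 + 1 / c) * (1 + Φ)) * ‖g t‖ := by gcongr
    _ = (1 + a) / 2 * (1 + 1 / c) * (t ^ β * ‖g t‖) * (1 + Φ) := by ring

theorem IsInertialSolution.exists_forall_rpow_mul_sub_le_and_norm_le
    (hx : IsInertialSolution F α t₀ g x x' x'') (hF : Differentiable ℝ F) (ht₀ : 1 ≤ t₀)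
    (xstar : E) (hgap : ∀ t ∈ Ici t₀, 0 ≤ F (x t) - F xstar)
    (hgrad : ∀ t ∈ Ici t₀, F (x t) - F xstar ≤ ⟪gradient F (x t), x t - xstar⟫)
    {lam a β : ℝ} (hlam : 0 < lam) (hlam2 : lam < 2) (ha : lam ≤ a) (haα : a ≤ α - lam / 2)
    (hβ : lam / 2 ≤ β) (hg : IntegrableOn (fun t ↦ t ^ β * ‖g t‖) (Ici t₀)) :
    ∃ M, ∀ t ∈ Ici t₀, t ^ lam * (F (x t) - F xstar) ≤ M ∧ ‖x' t‖ ≤ M := by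
  obtain ⟨C, hC0, hC⟩ := hx.exists_hasDerivAt_lyapunovEnergy_le_mul_one_add hF ht₀ xstar hgap
    hgrad hlam hlam2 ha haα hβ
  obtain ⟨c, hc, hcoer⟩ := exists_pos_forall_mul_add_le_lyapunovEnergy (F := F) (x := x)
    (x' := x') xstar (a := a) (lam := lam) (α := α) (by nlinarith)
  set Φ := lyapunovEnergy F xstar x x' α lam a
  have htpos : ∀ t ∈ Ici t₀, 0 < t := fun t ht ↦ one_pos.trans_le (ht₀.trans ht)
  have hf : ∀ t ∈ Ici t₀, 0 ≤ t ^ lam * (F (x t) - F xstar) := fun t ht ↦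
    mul_nonneg (Real.rpow_nonneg (htpos t ht).le _) (hgap t ht)
  have hcoer' : ∀ t ∈ Ici t₀, t ^ lam * (F (x t) - F xstar) + c * (t ^ (lam / 2) * ‖x' t‖) ^ 2
      ≤ Φ t := fun t ht ↦ by
    nlinarith [hcoer t (htpos t ht), sq_nonneg (t ^ (lam / 2 - 1) * ‖x t - xstar‖)]
  have hΦ : ∀ t ∈ Ici t₀, 0 ≤ Φ t := fun t ht ↦ by
    nlinarith [hcoer' t ht, hf t ht, sq_nonneg (t ^ (lam / 2) * ‖x' t‖)]
  set M := (1 + Φ t₀) * Real.exp (∫ s in Ici t₀, C * (s ^ β * ‖g s‖))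
  have hgronwall : ∀ t ∈ Ici t₀, 1 + Φ t ≤ M := fun t ht ↦
    one_add_le_mul_exp_setIntegral_of_hasDerivAt_le hC hΦ (hg.const_mul C) (fun s hs ↦
      mul_nonneg hC0 (mul_nonneg (Real.rpow_nonneg (htpos s hs).le _) (norm_nonneg _))) ht
  have hM : 1 ≤ M := by linarith [hgronwall t₀ self_mem_Ici, hΦ t₀ self_mem_Ici]
  refine ⟨M + M / c, fun t ht ↦ ⟨?_, ?_⟩⟩
  · linarith [hcoer' t ht, hgronwall t ht, div_nonneg (zero_le_one.trans hM) hc.le,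
      mul_nonneg hc.le (sq_nonneg (t ^ (lam / 2) * ‖x' t‖))]
  · have hweight : 1 ≤ t ^ (lam / 2) := Real.one_le_rpow (ht₀.trans ht) (by linarith)
    have hu : (t ^ (lam / 2) * ‖x' t‖) ^ 2 ≤ M / c := by
      rw [le_div_iff₀ hc]; linarith [hcoer' t ht, hgronwall t ht, hf t ht]
    nlinarith [sq_nonneg (t ^ (lam / 2) * ‖x' t‖ - 1), norm_nonneg (x' t)]

theorem IsInertialSolution.tendsto_and_exists_forall_norm_le
    (hx : IsInertialSolution F α t₀ g x x' x'') (hF : Differentiable ℝ F)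
    (hconv : ConvexOn ℝ univ F) (ht₀ : 1 ≤ t₀) {xstar : E} (hmin : ∀ y, F xstar ≤ F y)
    {K ε : ℝ} (hK : 0 < K) (hε : 0 < ε)
    (hgrowth : ∀ y, ‖y - xstar‖ < ε → K * ‖y - xstar‖ ^ 2 ≤ F y - F xstar)
    (hα : 0 < α) {β : ℝ} (hβ : 0 < β) (hg : IntegrableOn (fun t ↦ t ^ β * ‖g t‖) (Ici t₀)) :
    Tendsto x atTop (𝓝 xstar) ∧ ∃ B, ∀ t ∈ Ici t₀, ‖x' t‖ ≤ B := by
  obtain ⟨lam, hlam, hlam2, hlamα, hlamβ⟩ : ∃ lam, 0 < lam ∧ lam < 2 ∧ lam ≤ α / 2 ∧ lam ≤ β :=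
    ⟨min (min (α / 2) 1) β, by positivity,
      by linarith [min_le_left (min (α / 2) 1) β, min_le_right (α / 2) 1],
      (min_le_left _ _).trans (min_le_left _ _), min_le_right _ _⟩
  obtain ⟨M, hM⟩ := hx.exists_forall_rpow_mul_sub_le_and_norm_le hF ht₀ xstar
    (fun t _ ↦ sub_nonneg.2 (hmin _)) (fun t _ ↦ hconv.sub_le_inner_gradient (hF _) xstar)
    hlam hlam2 (a := α - lam / 2) (by linarith) le_rfl (by linarith) hg
  refine ⟨hconv.tendsto_nhds_of_tendsto_apply hmin hK hε hgrowth ?_, M, fun t ht ↦ (hM t ht).2⟩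
  have hupper : Tendsto (fun t ↦ F xstar + M * t ^ (-lam)) atTop (𝓝 (F xstar)) := by
    simpa using ((tendsto_rpow_neg_atTop hlam).const_mul M).const_add (F xstar)
  refine tendsto_of_tendsto_of_tendsto_of_le_of_le' tendsto_const_nhds hupper
    (Eventually.of_forall fun t ↦ hmin (x t)) ?_
  filter_upwards [eventually_ge_atTop t₀] with t ht
  linarith [le_mul_rpow_neg_of_rpow_mul_le (by linarith : 0 < t) (hM t ht).1]

theorem IsInertialSolution.exists_hasDerivAt_lyapunovEnergy_le_mul_norm
    (hx : IsInertialSolution F α t₀ g x x' x'') {t : ℝ} (ht : t ∈ Ici t₀) (ht1 : 1 ≤ t)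
    (hF : DifferentiableAt ℝ F (x t)) (xstar : E) {γ lam a K B R : ℝ} (ha : 0 ≤ a)
    (haα : a ≤ α - lam / 2) (hμ : 0 ≤ a * (α + 1 - lam)) (hδ : lam ≤ a * γ) (hK : 0 < K)
    (hH1 : γ * (F (x t) - F xstar) ≤ ⟪gradient F (x t), x t - xstar⟫)
    (hH2 : K * ‖x t - xstar‖ ^ 2 ≤ F (x t) - F xstar) (hB : ‖x' t‖ ≤ B)
    (hR : ‖x t - xstar‖ ≤ R)
    (hlarge : a * (α + 1 - lam) * (lam - 2) ≤ 2 * K * (a * γ - lam) * t ^ 2) :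
    ∃ d, HasDerivAt (lyapunovEnergy F xstar x x' α lam a) d t ∧
      d ≤ (B + a * R) * (t ^ lam * ‖g t‖) := by
  have htpos : 0 < t := one_pos.trans_le ht1
  obtain ⟨d, hd, hdle⟩ := hx.exists_hasDerivAt_lyapunovEnergy_le ht htpos hF xstar ha haα
    (κ := a * γ) (by rw [mul_assoc]; exact mul_le_mul_of_nonneg_left hH1 ha)
  refine ⟨d, hd, ?_⟩
  have hf : 0 ≤ F (x t) - F xstar := (mul_nonneg hK.le (sq_nonneg _)).trans hH2
  have hpow : t ^ (lam - 1) = t ^ (lam - 3) * t ^ 2 := by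
    rw [← Real.rpow_natCast, ← Real.rpow_add htpos]; norm_num; ring_nf
  have hP3 : 0 < t ^ (lam - 3) := Real.rpow_pos_of_pos htpos _
  -- for `λ > 2` the curvature term has the wrong sign; H2 and `t` large make it small
  have hcurv : a * (α + 1 - lam) * (lam - 2) * ‖x t - xstar‖ ^ 2
      ≤ 2 * (a * γ - lam) * t ^ 2 * (F (x t) - F xstar) := by
    rcases le_or_gt lam 2 with hlam2 | hlam2
    · nlinarith [mul_nonneg (mul_nonneg hμ (sub_nonneg.2 hlam2)) (sq_nonneg ‖x t - xstar‖),
        mul_nonneg (mul_nonneg (sub_nonneg.2 hδ) (sq_nonneg t)) hf]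
    · have h1 := mul_le_mul_of_nonneg_left hH2 (mul_nonneg hμ (sub_nonneg.2 hlam2.le))
      have h2 := mul_le_mul_of_nonneg_right hlarge hf
      refine le_of_mul_le_mul_left ?_ hK
      nlinarith
  have hdrift : (lam - a * γ) * t ^ (lam - 1) * (F (x t) - F xstar)
      + a * (α + 1 - lam) / 2 * (lam - 2) * t ^ (lam - 3) * ‖x t - xstar‖ ^ 2 ≤ 0 := by
    rw [hpow]; nlinarith [mul_le_mul_of_nonneg_left hcurv hP3.le]
  have hweight : t ^ (lam - 1) ≤ t ^ lam := Real.rpow_le_rpow_of_exponent_le ht1 (by linarith)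
  have hpert : t ^ lam * ‖x' t‖ + a * t ^ (lam - 1) * ‖x t - xstar‖ ≤ (B + a * R) * t ^ lam := by
    have := mul_le_mul hweight hR (norm_nonneg _) (Real.rpow_nonneg htpos.le _)
    nlinarith [mul_le_mul_of_nonneg_left hB (Real.rpow_nonneg htpos.le lam)]
  calc d ≤ (t ^ lam * ‖x' t‖ + a * t ^ (lam - 1) * ‖x t - xstar‖) * ‖g t‖ := by linarith
    _ ≤ (B + a * R) * t ^ lam * ‖g t‖ := by gcongr
    _ = (B + a * R) * (t ^ lam * ‖g t‖) := by ring

theorem IsInertialSolution.exists_eventually_rpow_mul_sub_le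
    (hx : IsInertialSolution F α t₀ g x x' x'') (hF : Differentiable ℝ F) (ht₀ : 1 ≤ t₀)
    (xstar : E) {γ lam K B R : ℝ} (hγ : 0 < γ) (hlam : 0 < lam) (hlamα : lam ≤ α + 1)
    (hfeas : lam / γ < α - lam / 2) (hK : 0 < K)
    (hH1 : ∀ t ∈ Ici t₀, γ * (F (x t) - F xstar) ≤ ⟪gradient F (x t), x t - xstar⟫)
    (hH2 : ∀ t ∈ Ici t₀, K * ‖x t - xstar‖ ^ 2 ≤ F (x t) - F xstar)
    (hB : ∀ t ∈ Ici t₀, ‖x' t‖ ≤ B) (hR : ∀ t ∈ Ici t₀, ‖x t - xstar‖ ≤ R)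
    (hg : IntegrableOn (fun t ↦ t ^ lam * ‖g t‖) (Ici t₀)) :
    ∃ C, ∀ᶠ t in atTop, t ^ lam * (F (x t) - F xstar) ≤ C := by
  obtain ⟨a, ha, haα⟩ : ∃ a, lam / γ < a ∧ a ≤ α - lam / 2 := ⟨_, hfeas, le_rfl⟩
  have ha0 : 0 < a := (div_pos hlam hγ).trans ha
  have hδ : lam < a * γ := (div_lt_iff₀ hγ).1 ha
  have hμ : 0 ≤ a * (α + 1 - lam) := mul_nonneg ha0.le (by linarith)
  have hBR : 0 ≤ B + a * R := add_nonneg ((norm_nonneg _).trans (hB t₀ self_mem_Ici))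
    (mul_nonneg ha0.le ((norm_nonneg _).trans (hR t₀ self_mem_Ici)))
  obtain ⟨T, hT⟩ := eventually_atTop.1 ((eventually_ge_atTop t₀).and
    (((tendsto_pow_atTop two_ne_zero).eventually_ge_atTop (a ^ 2 / K)).and
      ((tendsto_pow_atTop two_ne_zero).eventually_ge_atTop
        (a * (α + 1 - lam) * (lam - 2) / (2 * K * (a * γ - lam))))))
  have hTt₀ : t₀ ≤ T := (hT T le_rfl).1
  have hmem : ∀ t ∈ Ici T, t ∈ Ici t₀ := fun t ht ↦ hTt₀.trans ht
  have hderiv : ∀ t ∈ Ici T, ∃ d, HasDerivAt (lyapunovEnergy F xstar x x' α lam a) d t ∧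
      d ≤ (B + a * R) * (t ^ lam * ‖g t‖) := fun t ht ↦
    hx.exists_hasDerivAt_lyapunovEnergy_le_mul_norm (hmem t ht) (ht₀.trans (hmem t ht)) (hF _)
      xstar ha0.le haα hμ hδ.le hK (hH1 t (hmem t ht)) (hH2 t (hmem t ht)) (hB t (hmem t ht))
      (hR t (hmem t ht))
      (by have := (hT t ht).2.2; rw [div_le_iff₀ (by nlinarith)] at this; linarith)
  refine ⟨2 * (lyapunovEnergy F xstar x x' α lam a T
    + ∫ s in Ici T, (B + a * R) * (s ^ lam * ‖g s‖)), ?_⟩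
  filter_upwards [eventually_ge_atTop T] with t ht
  have htpos : 0 < t := one_pos.trans_le (ht₀.trans (hmem t ht))
  have hbound := le_add_setIntegral_Ici_of_hasDerivAt_le hderiv
    ((hg.mono_set (Ici_subset_Ici.2 hTt₀)).const_mul _)
    (fun s hs ↦ mul_nonneg hBR (mul_nonneg (Real.rpow_nonneg
      (one_pos.trans_le (ht₀.trans (hmem s hs))).le _) (norm_nonneg _))) ht
  calc t ^ lam * (F (x t) - F xstar) ≤ 2 * lyapunovEnergy F xstar x x' α lam a t :=
        rpow_mul_sub_le_two_mul_lyapunovEnergy xstar htpos hμ (hH2 t (hmem t ht))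
          (by have := (hT t ht).2.1; rw [div_le_iff₀ hK] at this; linarith)
    _ ≤ _ := by linarith

end Lyapunov

theorem stmt_5_general
    {n : ℕ}
    (F : EuclideanSpace ℝ (Fin n) → ℝ) (Fstar : ℝ)
    (Xstar : Set (EuclideanSpace ℝ (Fin n)))
    (hXstar : Xstar = {z | ∀ y, F z ≤ F y})
    (hFstar : ∀ z ∈ Xstar, F z = Fstar)
    (hconv : ConvexOn ℝ Set.univ F)
    (hdiff : Differentiable ℝ F)
    (α t₀ γ m : ℝ) (hα : 0 < α)
    (hγ : 1 ≤ γ) (hγ2 : γ ≤ 2) (hm : 0 < m) (hm2 : m < 2 * γ / (γ + 2))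
    (g x x' x'' : ℝ → EuclideanSpace ℝ (Fin n))
    (hx : ∀ t ∈ Set.Ici t₀, HasDerivAt x (x' t) t)
    (hx'd : ∀ t ∈ Set.Ici t₀, HasDerivAt x' (x'' t) t)
    (hode : ∀ t ∈ Set.Ici t₀, x'' t + (α / t) • x' t + gradient F (x t) = g t)
    (hH1 : ∀ z ∈ Xstar, ∃ η > 0, ∀ y : EuclideanSpace ℝ (Fin n),
      ‖y - z‖ < η → F y - Fstar ≤ (1 / γ) * ⟪gradient F y, y - z⟫)
    (hH2 : ∀ z ∈ Xstar, ∃ K > 0, ∃ ε > 0, ∀ y : EuclideanSpace ℝ (Fin n),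
      ‖y - z‖ < ε → K * Metric.infDist y Xstar ^ (2 : ℝ) ≤ F y - Fstar)
    (xstar : EuclideanSpace ℝ (Fin n)) (huniq : Xstar = {xstar})
    (hint : IntegrableOn (fun t : ℝ => t ^ (m * α) * ‖g t‖) (Set.Ici t₀)) :
    ∃ C > 0, ∃ t₁ ≥ t₀, ∀ t ≥ t₁,
      F (x t) - Fstar ≤ C * t ^ (-(m * α)) := by
  have hmem : xstar ∈ Xstar := huniq ▸ rfl
  have hmin : ∀ y, F xstar ≤ F y := by simpa [hXstar] using hmem
  obtain rfl := hFstar xstar hmem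
  obtain ⟨η, hη, hH1⟩ := hH1 xstar hmem
  obtain ⟨K, hK, ε, hε, hH2⟩ := hH2 xstar hmem
  have hγ0 : 0 < γ := one_pos.trans_le hγ
  have hgrad : ∀ y, ‖y - xstar‖ < η → γ * (F y - F xstar) ≤ ⟪gradient F y, y - xstar⟫ :=
    fun y hy ↦ by have h := hH1 y hy; rw [one_div_mul_eq_div, le_div_iff₀ hγ0] at h; linarith
  have hgrowth : ∀ y, ‖y - xstar‖ < ε → K * ‖y - xstar‖ ^ 2 ≤ F y - F xstar := fun y hy ↦ by
    simpa [huniq, Metric.infDist_singleton, dist_eq_norm] using hH2 y hy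
  have hmγ : m * (γ + 2) < 2 * γ := (lt_div_iff₀ (by linarith)).1 hm2
  have hmα : 0 < m * α := mul_pos hm hα
  have hmα₁ : m * α ≤ α + 1 := by nlinarith
  have hfeas : m * α / γ < α - m * α / 2 := by rw [div_lt_iff₀ hγ0]; nlinarith
  have hsol : IsInertialSolution F α (max t₀ 1) g x x' x'' :=
    IsInertialSolution.mono ⟨hx, hx'd, hode⟩ (le_max_left _ _)
  obtain ⟨hlim, B, hB⟩ := hsol.tendsto_and_exists_forall_norm_le hdiff hconv (le_max_right _ _)
    hmin hK hε hgrowth hα hmα (hint.mono_set (Ici_subset_Ici.2 (le_max_left _ _)))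
  obtain ⟨T, hT⟩ := eventually_atTop.1 ((hlim.eventually (Metric.ball_mem_nhds xstar
    (lt_min hη hε))).and (eventually_ge_atTop (max t₀ 1)))
  have hnear : ∀ t ∈ Ici T, ‖x t - xstar‖ < min η ε := fun t ht ↦ by
    simpa [dist_eq_norm] using (hT t ht).1
  have hT₁ : max t₀ 1 ≤ T := (hT T le_rfl).2
  obtain ⟨C, hC⟩ := (hsol.mono hT₁).exists_eventually_rpow_mul_sub_le hdiff
    ((le_max_right _ _).trans hT₁) xstar hγ0 hmα hmα₁ hfeas hK
    (fun t ht ↦ hgrad _ ((hnear t ht).trans_le (min_le_left _ _)))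
    (fun t ht ↦ hgrowth _ ((hnear t ht).trans_le (min_le_right _ _)))
    (fun t ht ↦ hB t (hT₁.trans ht)) (fun t ht ↦ (hnear t ht).le)
    (hint.mono_set (Ici_subset_Ici.2 ((le_max_left _ _).trans hT₁)))
  exact exists_pos_forall_le_mul_rpow_neg t₀ hC

theorem stmt_5
    {n : ℕ} (hn : 1 ≤ n)
    (F : EuclideanSpace ℝ (Fin n) → ℝ) (Fstar : ℝ)
    (Xstar : Set (EuclideanSpace ℝ (Fin n)))
    (hXstar : Xstar = {z | ∀ y, F z ≤ F y})
    (hne : Xstar.Nonempty)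
    (hFstar : ∀ z ∈ Xstar, F z = Fstar)
    (hconv : ConvexOn ℝ Set.univ F)
    (hdiff : Differentiable ℝ F)
    (α t₀ γ m : ℝ) (hα : 0 < α) (ht₀ : 0 < t₀)
    (hγ : 1 ≤ γ) (hγ2 : γ ≤ 2) (hm : 0 < m) (hm2 : m < 2 * γ / (γ + 2))
    (g x x' x'' : ℝ → EuclideanSpace ℝ (Fin n))
    (hg : ContinuousOn g (Set.Ici t₀))
    (hx : ∀ t ∈ Set.Ici t₀, HasDerivAt x (x' t) t)
    (hx'd : ∀ t ∈ Set.Ici t₀, HasDerivAt x' (x'' t) t)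
    (hx''c : ContinuousOn x'' (Set.Ici t₀))
    (hode : ∀ t ∈ Set.Ici t₀, x'' t + (α / t) • x' t + gradient F (x t) = g t)
    (hH1 : ∀ z ∈ Xstar, ∃ η > 0, ∀ y : EuclideanSpace ℝ (Fin n),
      ‖y - z‖ < η → F y - Fstar ≤ (1 / γ) * ⟪gradient F y, y - z⟫)
    (hH2 : ∀ z ∈ Xstar, ∃ K > 0, ∃ ε > 0, ∀ y : EuclideanSpace ℝ (Fin n),
      ‖y - z‖ < ε → K * Metric.infDist y Xstar ^ (2 : ℝ) ≤ F y - Fstar)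
    (xstar : EuclideanSpace ℝ (Fin n)) (huniq : Xstar = {xstar})
    (hint : IntegrableOn (fun t : ℝ => t ^ (m * α) * ‖g t‖) (Set.Ici t₀)) :
    ∃ C > 0, ∃ t₁ ≥ t₀, ∀ t ≥ t₁,
      F (x t) - Fstar ≤ C * t ^ (-(m * α)) :=
  stmt_5_general F Fstar Xstar hXstar hFstar hconv hdiff α t₀ γ m hα hγ hγ2 hm hm2 g x x' x'' hx
    hx'd hode hH1 hH2 xstar huniq hint
end

section
/- Let F : ℝⁿ → ℝ be a convex differentiable function whose set of minimizers X* = argmin F is nonempty, with minimum value F*. If F satisfies hypothesis H1(γ) for some γ ≥ 1, then for every minimizer x* ∈ X* there exist M > 0 and η > 0 such that F(x) − F* ≤ M · ‖x − x*‖^γ for all x with ‖x − x*‖ < η. -/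
/-!
Along a unit ray `s ↦ z + s • u`, H1(γ) says `γ φ(s) ≤ s φ'(s)` for `φ(s) = F(z + s • u) - F*`,
so `φ(s) / s^γ` is nondecreasing. Comparing a point at distance `r` with the point at a fixed
distance `b` on the same ray, where continuity at `z` bounds `φ(b)` by `1` (H1 at `z` itself
gives `F z ≤ F*`), yields `φ(r) ≤ b^(-γ) r^γ`.
-/

open Set
open scoped RealInnerProductSpace

theorem monotoneOn_mul_rpow_neg_of_mul_le_mul_deriv {φ φ' : ℝ → ℝ} {γ η : ℝ}
    (hφ : ∀ s ∈ Ioo 0 η, HasDerivAt φ (φ' s) s)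
    (h : ∀ s ∈ Ioo 0 η, γ * φ s ≤ s * φ' s) :
    MonotoneOn (fun s => φ s * s ^ (-γ)) (Ioo 0 η) := by
  have hderiv : ∀ s ∈ Ioo 0 η,
      HasDerivAt (fun s => φ s * s ^ (-γ)) (φ' s * s ^ (-γ) + φ s * (-γ * s ^ (-γ - 1))) s :=
    fun s hs => (hφ s hs).mul (Real.hasDerivAt_rpow_const (Or.inl hs.1.ne'))
  refine monotoneOn_of_hasDerivWithinAt_nonneg (convex_Ioo 0 η)
    (fun s hs => (hderiv s hs).continuousAt.continuousWithinAt)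
    (fun s hs => (hderiv s (interior_subset hs)).hasDerivWithinAt) fun s hs => ?_
  rw [interior_Ioo] at hs
  have hpos : 0 < s ^ (-γ - 1) := Real.rpow_pos_of_pos hs.1 _
  have hsplit : s ^ (-γ) = s * s ^ (-γ - 1) := by
    rw [Real.rpow_sub_one hs.1.ne', mul_div_cancel₀ _ hs.1.ne']
  rw [hsplit]
  nlinarith [h s hs]

variable {E : Type*} [NormedAddCommGroup E] [InnerProductSpace ℝ E] [CompleteSpace E]

theorem hasDerivAt_comp_add_smul {F : E → ℝ} {z u : E} {s : ℝ}
    (hF : DifferentiableAt ℝ F (z + s • u)) :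
    HasDerivAt (fun t : ℝ => F (z + t • u)) ⟪gradient F (z + s • u), u⟫ s := by
  have hline : HasDerivAt (fun t : ℝ => z + t • u) u s := by
    simpa using ((hasDerivAt_id s).smul_const u).const_add z
  have h := hF.hasGradientAt.hasFDerivAt.comp_hasDerivAt s hline
  rwa [InnerProductSpace.toDual_apply_apply] at h

variable {F : E → ℝ} {z : E} {c γ η : ℝ}

theorem monotoneOn_sub_mul_rpow_neg_along_ray (hγ : 0 < γ)
    (hF : ∀ y, ‖y - z‖ < η → DifferentiableAt ℝ F y)
    (hH : ∀ y, ‖y - z‖ < η → F y - c ≤ (1 / γ) * ⟪gradient F y, y - z⟫)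
    {u : E} (hu : ‖u‖ = 1) :
    MonotoneOn (fun s => (F (z + s • u) - c) * s ^ (-γ)) (Ioo 0 η) := by
  have hdist : ∀ s ∈ Ioo 0 η, ‖z + s • u - z‖ < η := fun s hs => by
    simpa [norm_smul, hu, abs_of_pos hs.1] using hs.2
  refine monotoneOn_mul_rpow_neg_of_mul_le_mul_deriv
    (fun s hs => (hasDerivAt_comp_add_smul (hF _ (hdist s hs))).sub_const c) fun s hs => ?_
  have h := hH _ (hdist s hs)
  rwa [add_sub_cancel_left, real_inner_smul_right, one_div, le_inv_mul_iff₀ hγ] at h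

theorem exists_sub_le_mul_norm_rpow (hγ : 0 < γ) (hη : 0 < η)
    (hF : ∀ y, ‖y - z‖ < η → DifferentiableAt ℝ F y)
    (hH : ∀ y, ‖y - z‖ < η → F y - c ≤ (1 / γ) * ⟪gradient F y, y - z⟫) :
    ∃ M > 0, ∃ δ > 0, ∀ y, ‖y - z‖ < δ → F y - c ≤ M * ‖y - z‖ ^ γ := by
  have hFz : F z - c ≤ 0 := by simpa using hH z (by simpa using hη)
  obtain ⟨ε, hε, hcont⟩ :=
    Metric.continuousAt_iff.1 (hF z (by simpa using hη)).continuousAt 1 one_pos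
  obtain ⟨b, hb, hbηε⟩ := exists_between (lt_min hη hε)
  obtain ⟨hbη, hbε⟩ := lt_min_iff.1 hbηε
  refine ⟨b ^ (-γ), Real.rpow_pos_of_pos hb _, b, hb, fun y hy => ?_⟩
  rcases eq_or_ne y z with rfl | hyz
  · simpa [Real.zero_rpow hγ.ne'] using hFz
  set r := ‖y - z‖
  have hr : 0 < r := norm_pos_iff.2 (sub_ne_zero.2 hyz)
  set u := r⁻¹ • (y - z)
  have hu : ‖u‖ = 1 := by
    rw [norm_smul, Real.norm_eq_abs, abs_of_pos (inv_pos.2 hr)]; exact inv_mul_cancel₀ hr.ne'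
  have hyu : z + r • u = y := by simp [u, smul_inv_smul₀ hr.ne']
  have hmono := monotoneOn_sub_mul_rpow_neg_along_ray hγ hF hH hu ⟨hr, hy.trans hbη⟩ ⟨hb, hbη⟩ hy.le
  simp only [hyu] at hmono
  have hFb : F (z + b • u) - c ≤ 1 := by
    have := hcont (x := z + b • u) (by simpa [dist_eq_norm, norm_smul, hu, abs_of_pos hb] using hbε)
    rw [Real.dist_eq] at this
    linarith [le_abs_self (F (z + b • u) - F z)]
  have hrγ : r ^ (-γ) * r ^ γ = 1 := by rw [← Real.rpow_add hr, neg_add_cancel, Real.rpow_zero]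
  calc F y - c = (F y - c) * r ^ (-γ) * r ^ γ := by rw [mul_assoc, hrγ, mul_one]
    _ ≤ (F (z + b • u) - c) * b ^ (-γ) * r ^ γ := by gcongr
    _ ≤ 1 * b ^ (-γ) * r ^ γ := by gcongr
    _ = b ^ (-γ) * r ^ γ := by rw [one_mul]

theorem stmt_12_general
    {n : ℕ}
    (F : EuclideanSpace ℝ (Fin n) → ℝ) (Fstar : ℝ)
    (Xstar : Set (EuclideanSpace ℝ (Fin n)))
    (hdiff : Differentiable ℝ F)
    (γ : ℝ) (hγ : 1 ≤ γ)
    (hH1 : ∀ z ∈ Xstar, ∃ η > 0, ∀ y : EuclideanSpace ℝ (Fin n),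
      ‖y - z‖ < η → F y - Fstar ≤ (1 / γ) * ⟪gradient F y, y - z⟫)
    :
    ∀ z ∈ Xstar, ∃ M > 0, ∃ η > 0, ∀ y : EuclideanSpace ℝ (Fin n),
      ‖y - z‖ < η → F y - Fstar ≤ M * ‖y - z‖ ^ γ := by
  intro z hz
  obtain ⟨η, hη, hH⟩ := hH1 z hz
  exact exists_sub_le_mul_norm_rpow (by linarith) hη (fun y _ => hdiff y) hH

theorem stmt_12
    {n : ℕ} (hn : 1 ≤ n)
    (F : EuclideanSpace ℝ (Fin n) → ℝ) (Fstar : ℝ)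
    (Xstar : Set (EuclideanSpace ℝ (Fin n)))
    (hXstar : Xstar = {z | ∀ y, F z ≤ F y})
    (hne : Xstar.Nonempty)
    (hFstar : ∀ z ∈ Xstar, F z = Fstar)
    (hconv : ConvexOn ℝ Set.univ F)
    (hdiff : Differentiable ℝ F)
    (γ : ℝ) (hγ : 1 ≤ γ)
    (hH1 : ∀ z ∈ Xstar, ∃ η > 0, ∀ y : EuclideanSpace ℝ (Fin n),
      ‖y - z‖ < η → F y - Fstar ≤ (1 / γ) * ⟪gradient F y, y - z⟫)
    :
    ∀ z ∈ Xstar, ∃ M > 0, ∃ η > 0, ∀ y : EuclideanSpace ℝ (Fin n),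
      ‖y - z‖ < η → F y - Fstar ≤ M * ‖y - z‖ ^ γ :=
  stmt_12_general F Fstar Xstar hdiff γ hγ hH1
end

section
/- Let θ ∈ (0,1), α > 0, t₀ > 0, and set β(t) = α/t^θ. Let x : [t₀, ∞) → ℝⁿ be a solution of the perturbed inertial ODE with damping β(t). Fix a minimizer x* of F and γ ≥ 1, and define, for t ≥ t₀: E(t) = F(x(t)) − F* + (1/2)‖x'(t)‖² + (2β(t)/(γ+2))⟨x(t) − x*, x'(t)⟩. If F satisfies H1(γ) globally at x*, then for all t ≥ t₀: E'(t) + (2γ/(γ+2))·β(t)·E(t) ≤ (2/(γ+2))·(β'(t) + ((γ−2)/(γ+2))·β(t)²)·⟨x(t) − x*, x'(t)⟩ + ⟨g(t), x'(t) + (2β(t)/(γ+2))(x(t) − x*)⟩. -/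
/-!
Differentiate `E` and substitute the equation of motion for `x''`. The kinetic terms cancel,
and what remains differs from the right-hand side by
`(2β/(γ+2)) (γ (F(x) - F*) - ⟪x - x*, ∇F(x)⟫)`, which `H1(γ)` makes nonpositive.
-/

open scoped RealInnerProductSpace

theorem hasDerivAt_const_div_rpow {α θ t : ℝ} (ht : 0 < t) :
    HasDerivAt (fun s : ℝ => α / s ^ θ) (-(θ * α) / t ^ (θ + 1)) t := by
  refine ((hasDerivAt_const t α).div (Real.hasDerivAt_rpow_const (p := θ) (Or.inl ht.ne'))
    (Real.rpow_pos_of_pos ht θ).ne').congr_deriv ?_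
  rw [Real.rpow_add ht, Real.rpow_sub ht, Real.rpow_one]
  field_simp
  ring

section InertialEnergy

variable {H : Type*} [NormedAddCommGroup H] [InnerProductSpace ℝ H] [CompleteSpace H]

theorem HasGradientAt.comp_hasDerivAt {F : H → ℝ} {v x' : H} {x : ℝ → H} {t : ℝ}
    (hF : HasGradientAt F v (x t)) (hx : HasDerivAt x x' t) :
    HasDerivAt (fun s => F (x s)) ⟪v, x'⟫ t :=
  hF.hasFDerivAt.comp_hasDerivAt t hx

theorem hasDerivAt_inertialEnergy {F : H → ℝ} {Fstar : ℝ} {xstar : H} {x x' x'' : ℝ → H}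
    {c : ℝ → ℝ} {c' t : ℝ} (hF : DifferentiableAt ℝ F (x t))
    (hx : HasDerivAt x (x' t) t) (hx' : HasDerivAt x' (x'' t) t) (hc : HasDerivAt c c' t) :
    HasDerivAt (fun s => F (x s) - Fstar + (1 / 2) * ‖x' s‖ ^ 2 + c s * ⟪x s - xstar, x' s⟫)
      (⟪gradient F (x t), x' t⟫ + ⟪x' t, x'' t⟫ +
        (c' * ⟪x t - xstar, x' t⟫ + c t * (⟪x t - xstar, x'' t⟫ + ‖x' t‖ ^ 2))) t := by
  have hpot := (hF.hasGradientAt.comp_hasDerivAt hx).sub_const Fstar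
  have hkin := hx'.norm_sq.const_mul (1 / 2 : ℝ)
  have hcross := hc.mul ((hx.sub_const xstar).inner ℝ hx')
  refine ((hpot.add hkin).add hcross).congr_deriv ?_
  rw [real_inner_self_eq_norm_sq]
  ring

theorem inertialEnergy_deriv_add_le {F : H → ℝ} {Fstar γ : ℝ} {xstar : H}
    {x x' x'' g : ℝ → H} {β : ℝ → ℝ} {β' t d : ℝ} (hγ : 0 < γ) (hβ : 0 ≤ β t)
    (hβd : HasDerivAt β β' t) (hF : DifferentiableAt ℝ F (x t))
    (hx : HasDerivAt x (x' t) t) (hx' : HasDerivAt x' (x'' t) t)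
    (hode : x'' t + β t • x' t + gradient F (x t) = g t)
    (hH1 : F (x t) - Fstar ≤ (1 / γ) * ⟪gradient F (x t), x t - xstar⟫)
    (hd : HasDerivAt (fun s => F (x s) - Fstar + (1 / 2) * ‖x' s‖ ^ 2 +
      (2 * β s / (γ + 2)) * ⟪x s - xstar, x' s⟫) d t) :
    d + (2 * γ / (γ + 2)) * β t * (F (x t) - Fstar + (1 / 2) * ‖x' t‖ ^ 2 +
        (2 * β t / (γ + 2)) * ⟪x t - xstar, x' t⟫) ≤
      (2 / (γ + 2)) * (β' + ((γ - 2) / (γ + 2)) * β t ^ 2) * ⟪x t - xstar, x' t⟫ +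
        ⟪g t, x' t + (2 * β t / (γ + 2)) • (x t - xstar)⟫ := by
  have hc : HasDerivAt (fun s => 2 * β s / (γ + 2)) (2 * β' / (γ + 2)) t :=
    (hβd.const_mul 2).div_const _
  obtain rfl := hd.unique (hasDerivAt_inertialEnergy hF hx hx' hc)
  have hx'' : x'' t = g t - β t • x' t - gradient F (x t) := by
    rw [← hode]; abel
  have hH1' : γ * (F (x t) - Fstar) ≤ ⟪x t - xstar, gradient F (x t)⟫ := by
    rwa [one_div, ← div_eq_inv_mul, le_div_iff₀' hγ, real_inner_comm] at hH1
  rw [hx'']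
  simp only [inner_sub_right, inner_add_right, real_inner_smul_right, real_inner_self_eq_norm_sq,
    real_inner_comm (x' t), real_inner_comm (x t - xstar) (g t)]
  have hgap : 0 ≤ 2 * β t / (γ + 2) * (⟪x t - xstar, gradient F (x t)⟫ - γ * (F (x t) - Fstar)) :=
    mul_nonneg (by positivity) (sub_nonneg.2 hH1')
  rw [← sub_nonneg]
  convert hgap using 1
  field_simp
  ring

end InertialEnergy

theorem stmt_16_general
    {n : ℕ}
    (F : EuclideanSpace ℝ (Fin n) → ℝ) (Fstar : ℝ)
    (hdiff : Differentiable ℝ F)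
    (xstar : EuclideanSpace ℝ (Fin n))
    (α t₀ θ γ : ℝ) (hα : 0 < α) (ht₀ : 0 < t₀) (hγ : 1 ≤ γ)
    (g x x' x'' : ℝ → EuclideanSpace ℝ (Fin n))
    (hx : ∀ t ∈ Set.Ici t₀, HasDerivAt x (x' t) t)
    (hx'd : ∀ t ∈ Set.Ici t₀, HasDerivAt x' (x'' t) t)
    (hode : ∀ t ∈ Set.Ici t₀, x'' t + (α / t ^ θ) • x' t + gradient F (x t) = g t)
    (hH1 : ∀ y : EuclideanSpace ℝ (Fin n),
      F y - Fstar ≤ (1 / γ) * ⟪gradient F y, y - xstar⟫)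
    (E : ℝ → ℝ)
    (hE : ∀ t, E t = F (x t) - Fstar + (1 / 2) * ‖x' t‖ ^ 2 +
      (2 * (α / t ^ θ) / (γ + 2)) * ⟪x t - xstar, x' t⟫) :
    ∀ t ∈ Set.Ici t₀, ∀ d : ℝ, HasDerivAt E d t →
      d + (2 * γ / (γ + 2)) * (α / t ^ θ) * E t ≤
        (2 / (γ + 2)) * ((-(θ * α) / t ^ (θ + 1)) + ((γ - 2) / (γ + 2)) * (α / t ^ θ) ^ 2) *
          ⟪x t - xstar, x' t⟫ +
        ⟪g t, x' t + (2 * (α / t ^ θ) / (γ + 2)) • (x t - xstar)⟫ := by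
  intro t ht d hd
  have ht0 : 0 < t := ht₀.trans_le ht
  rw [funext hE] at hd
  rw [hE t]
  exact inertialEnergy_deriv_add_le (β := fun s => α / s ^ θ) (by linarith) (by positivity)
    (hasDerivAt_const_div_rpow ht0) (hdiff (x t)) (hx t ht) (hx'd t ht) (hode t ht) (hH1 (x t)) hd

theorem stmt_16
    {n : ℕ} (hn : 1 ≤ n)
    (F : EuclideanSpace ℝ (Fin n) → ℝ) (Fstar : ℝ)
    (hconv : ConvexOn ℝ Set.univ F)
    (hdiff : Differentiable ℝ F)
    (xstar : EuclideanSpace ℝ (Fin n)) (hmin : ∀ y, F xstar ≤ F y)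
    (hFstar : F xstar = Fstar)
    (α t₀ θ γ : ℝ) (hα : 0 < α) (ht₀ : 0 < t₀) (hθ : 0 < θ) (hθ1 : θ < 1) (hγ : 1 ≤ γ)
    (g x x' x'' : ℝ → EuclideanSpace ℝ (Fin n))
    (hg : ContinuousOn g (Set.Ici t₀))
    (hx : ∀ t ∈ Set.Ici t₀, HasDerivAt x (x' t) t)
    (hx'd : ∀ t ∈ Set.Ici t₀, HasDerivAt x' (x'' t) t)
    (hx''c : ContinuousOn x'' (Set.Ici t₀))
    (hode : ∀ t ∈ Set.Ici t₀, x'' t + (α / t ^ θ) • x' t + gradient F (x t) = g t)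
    (hH1 : ∀ y : EuclideanSpace ℝ (Fin n),
      F y - Fstar ≤ (1 / γ) * ⟪gradient F y, y - xstar⟫)
    (E : ℝ → ℝ)
    (hE : ∀ t, E t = F (x t) - Fstar + (1 / 2) * ‖x' t‖ ^ 2 +
      (2 * (α / t ^ θ) / (γ + 2)) * ⟪x t - xstar, x' t⟫) :
    ∀ t ∈ Set.Ici t₀, ∀ d : ℝ, HasDerivAt E d t →
      d + (2 * γ / (γ + 2)) * (α / t ^ θ) * E t ≤
        (2 / (γ + 2)) * ((-(θ * α) / t ^ (θ + 1)) + ((γ - 2) / (γ + 2)) * (α / t ^ θ) ^ 2) *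
          ⟪x t - xstar, x' t⟫ +
        ⟪g t, x' t + (2 * (α / t ^ θ) / (γ + 2)) • (x t - xstar)⟫ :=
  stmt_16_general F Fstar hdiff xstar α t₀ θ γ hα ht₀ hγ g x x' x'' hx hx'd hode hH1 E hE
end

section
/- Let θ ∈ [0,1], α > 0, t₀ > 0, and let x : [t₀, ∞) → ℝⁿ be a solution of the unperturbed inertial ODE (g ≡ 0) with damping α/t^θ. Fix a minimizer x* of F, real numbers λ ≥ 0 and p, and set ξ(t) = λ(λ + 1 − α t^{1−θ}). Define, for t ≥ t₀: a(t) = t(F(x(t)) − F*), b(t) = (1/(2t))‖λ(x(t) − x*) + t·x'(t)‖², c(t) = (1/(2t))‖x(t) − x*‖², E(t) = t(a(t) + b(t) + ξ(t)·c(t)), and H(t) = t^p E(t). If F satisfies H1(γ₁) globally at x* for some γ₁ ≥ 1, then for all t ≥ t₀: H'(t) ≤ t^p [ (2 + p − γ₁λ)·a(t) + (2λ + 2 + p − 2α t^{1−θ})·b(t) + λ((λ+1)(p − 2λ) − α(p + 1 − θ − 2λ)·t^{1−θ})·c(t) ]. -/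
open scoped RealInnerProductSpace

/-!
With `u = λ(x - x*) + t x'`, the ODE gives `u' = (λ + 1 - α t^{1-θ}) x' - t ∇F(x)`. Hence in `E'`
the terms `t² ⟪∇F(x), x'⟫` cancel, and since `t x' = u - λ(x - x*)` the remaining mixed terms
combine into `‖u‖² - λ² ‖x - x*‖²`. The resulting expression for `H' = t^p (p E / t + E')`
differs from the claimed bound by `t^p λ t (⟪∇F(x), x - x*⟫ - γ₁ (F(x) - F*))`, which is
nonnegative by H1(γ₁).
-/

namespace InertialDynamics

variable {E : Type*} [NormedAddCommGroup E] [InnerProductSpace ℝ E]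

lemma mul_div_rpow_eq_mul_rpow_one_sub {t : ℝ} (ht : 0 < t) (α θ : ℝ) :
    t * (α / t ^ θ) = α * t ^ (1 - θ) := by
  rw [Real.rpow_sub ht, Real.rpow_one]
  field_simp

lemma mul_inner_add_smul_inner {u v w : E} {t lam : ℝ} (h : t • w = u - lam • v) :
    t * (⟪u, w⟫ + lam * ⟪v, w⟫) = ‖u‖ ^ 2 - lam ^ 2 * ‖v‖ ^ 2 := by
  rw [mul_add, ← real_inner_smul_right, mul_left_comm, ← real_inner_smul_right, h]
  simp only [inner_sub_right, real_inner_smul_right, real_inner_self_eq_norm_sq,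
    real_inner_comm u v]
  ring

lemma hasDerivAt_anchored_velocity {x x' : ℝ → E} {x'' xstar : E} {lam t : ℝ}
    (hx : HasDerivAt x (x' t) t) (hx' : HasDerivAt x' x'' t) :
    HasDerivAt (fun τ ↦ lam • (x τ - xstar) + τ • x' τ) ((lam + 1) • x' t + t • x'') t := by
  refine (((hx.sub_const xstar).const_smul lam).add ((hasDerivAt_id' t).smul hx')).congr_deriv ?_
  module

lemma anchored_velocity_deriv_of_ode {x' x'' g : E} {α θ lam t : ℝ} (ht : 0 < t)
    (hode : x'' + (α / t ^ θ) • x' + g = 0) :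
    (lam + 1) • x' + t • x'' = (lam + 1 - α * t ^ (1 - θ)) • x' - t • g := by
  rw [← mul_div_rpow_eq_mul_rpow_one_sub ht]
  linear_combination (norm := module) t • hode

section Hilbert

variable [CompleteSpace E]

/-- The paper's `E(t)`, with the factors `1 / (2t)` of `b` and `c` cancelled against `t`. -/
noncomputable def energy (F : E → ℝ) (Fstar : ℝ) (xstar : E) (α θ lam : ℝ) (x x' : ℝ → E)
    (τ : ℝ) : ℝ :=
  τ ^ 2 * (F (x τ) - Fstar) + ‖lam • (x τ - xstar) + τ • x' τ‖ ^ 2 / 2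
    + lam * (lam + 1 - α * τ ^ (1 - θ)) * ‖x τ - xstar‖ ^ 2 / 2

lemma hasDerivAt_energy {F : E → ℝ} {Fstar : ℝ} {xstar : E} {α θ lam t : ℝ} {x x' : ℝ → E}
    {x'' : E} (ht : 0 < t) (hF : DifferentiableAt ℝ F (x t))
    (hx : HasDerivAt x (x' t) t) (hx' : HasDerivAt x' x'' t)
    (hode : x'' + (α / t ^ θ) • x' t + gradient F (x t) = 0) :
    HasDerivAt (energy F Fstar xstar α θ lam x x')
      (2 * t * (F (x t) - Fstar) - lam * t * ⟪gradient F (x t), x t - xstar⟫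
        + (lam + 1 - α * t ^ (1 - θ))
          * (‖lam • (x t - xstar) + t • x' t‖ ^ 2 - lam ^ 2 * ‖x t - xstar‖ ^ 2) / t
        - lam * α * (1 - θ) * t ^ (1 - θ) * ‖x t - xstar‖ ^ 2 / (2 * t)) t := by
  have hFx : HasDerivAt (fun τ ↦ F (x τ)) ⟪gradient F (x t), x' t⟫ t := by
    have h := hF.hasGradientAt.hasFDerivAt.comp_hasDerivAt t hx
    rwa [InnerProductSpace.toDual_apply_apply] at h
  have hs : HasDerivAt (fun τ ↦ τ ^ (1 - θ)) ((1 - θ) * t ^ (1 - θ - 1)) t :=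
    Real.hasDerivAt_rpow_const (Or.inl ht.ne')
  have hE := (((hasDerivAt_pow 2 t).mul (hFx.sub_const Fstar)).add
    ((hasDerivAt_anchored_velocity (lam := lam) (xstar := xstar) hx hx').norm_sq.div_const 2)).add
    ((((hs.const_mul α).const_sub (lam + 1)).const_mul lam).mul
      (hx.sub_const xstar).norm_sq |>.div_const 2)
  refine hE.congr_deriv ?_
  set u := lam • (x t - xstar) + t • x' t
  set v := x t - xstar
  have hx't : t • x' t = u - lam • v := by simp only [u]; abel
  have hug : ⟪u, gradient F (x t)⟫
      = lam * ⟪v, gradient F (x t)⟫ + t * ⟪x' t, gradient F (x t)⟫ := by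
    simp only [u, v, inner_add_left, real_inner_smul_left]
  rw [anchored_velocity_deriv_of_ode ht hode, ← mul_inner_add_smul_inner hx't, inner_sub_right,
    real_inner_smul_right, real_inner_smul_right, hug, real_inner_comm v, real_inner_comm (x' t),
    Real.rpow_sub ht (1 - θ), Real.rpow_one]
  field_simp
  ring

end Hilbert

end InertialDynamics

open InertialDynamics Filter Topology

theorem stmt_17_general
    {n : ℕ}
    (F : EuclideanSpace ℝ (Fin n) → ℝ) (Fstar : ℝ)
    (hdiff : Differentiable ℝ F)
    (xstar : EuclideanSpace ℝ (Fin n))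
    (α t₀ θ γ₁ lam p : ℝ) (ht₀ : 0 < t₀)
    (hγ₁ : 1 ≤ γ₁) (hlam : 0 ≤ lam)
    (x x' x'' : ℝ → EuclideanSpace ℝ (Fin n))
    (hx : ∀ t ∈ Set.Ici t₀, HasDerivAt x (x' t) t)
    (hx'd : ∀ t ∈ Set.Ici t₀, HasDerivAt x' (x'' t) t)
    (hode : ∀ t ∈ Set.Ici t₀, x'' t + (α / t ^ θ) • x' t + gradient F (x t) = 0)
    (hH1 : ∀ y : EuclideanSpace ℝ (Fin n),
      F y - Fstar ≤ (1 / γ₁) * ⟪gradient F y, y - xstar⟫)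
    (a b c E H : ℝ → ℝ)
    (ha : ∀ t, a t = t * (F (x t) - Fstar))
    (hb : ∀ t, b t = (1 / (2 * t)) * ‖lam • (x t - xstar) + t • x' t‖ ^ 2)
    (hc : ∀ t, c t = (1 / (2 * t)) * ‖x t - xstar‖ ^ 2)
    (hE : ∀ t, E t = t * (a t + b t + (lam * (lam + 1 - α * t ^ (1 - θ))) * c t))
    (hH : ∀ t, H t = t ^ p * E t) :
    ∀ t ∈ Set.Ici t₀, ∀ d : ℝ, HasDerivAt H d t →
      d ≤ t ^ p * ((2 + p - γ₁ * lam) * a t +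
        (2 * lam + 2 + p - 2 * α * t ^ (1 - θ)) * b t +
        lam * ((lam + 1) * (p - 2 * lam) - α * (p + 1 - θ - 2 * lam) * t ^ (1 - θ)) * c t) := by
  intro t ht d hd
  have ht0 : 0 < t := ht₀.trans_le ht
  have hHe : H =ᶠ[𝓝 t] fun τ ↦ τ ^ p * energy F Fstar xstar α θ lam x x' τ := by
    filter_upwards [eventually_ne_nhds ht0.ne'] with τ hτ
    rw [hH, hE, ha, hb, hc, energy]
    field_simp
  have hHd := ((Real.hasDerivAt_rpow_const (p := p) (Or.inl ht0.ne')).mul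
    (hasDerivAt_energy ht0 (hdiff _) (hx t ht) (hx'd t ht) (hode t ht))).congr_of_eventuallyEq hHe
  have hγf : γ₁ * (F (x t) - Fstar) ≤ ⟪gradient F (x t), x t - xstar⟫ := by
    have h := mul_le_mul_of_nonneg_left (hH1 (x t)) (zero_le_one.trans hγ₁)
    rwa [← mul_assoc, mul_one_div_cancel (by linarith), one_mul] at h
  have hgap :
      0 ≤ t ^ p * (lam * t * (⟪gradient F (x t), x t - xstar⟫ - γ₁ * (F (x t) - Fstar))) := by
    have := sub_nonneg.2 hγf
    positivity
  rw [hd.unique hHd, ha, hb, hc, energy, Real.rpow_sub ht0 p 1, Real.rpow_one, ← sub_nonneg]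
  convert hgap using 1
  field_simp
  ring

theorem stmt_17
    {n : ℕ} (hn : 1 ≤ n)
    (F : EuclideanSpace ℝ (Fin n) → ℝ) (Fstar : ℝ)
    (hconv : ConvexOn ℝ Set.univ F)
    (hdiff : Differentiable ℝ F)
    (xstar : EuclideanSpace ℝ (Fin n)) (hmin : ∀ y, F xstar ≤ F y)
    (hFstar : F xstar = Fstar)
    (α t₀ θ γ₁ lam p : ℝ) (hα : 0 < α) (ht₀ : 0 < t₀) (hθ : 0 ≤ θ) (hθ1 : θ ≤ 1)
    (hγ₁ : 1 ≤ γ₁) (hlam : 0 ≤ lam)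
    (x x' x'' : ℝ → EuclideanSpace ℝ (Fin n))
    (hx : ∀ t ∈ Set.Ici t₀, HasDerivAt x (x' t) t)
    (hx'd : ∀ t ∈ Set.Ici t₀, HasDerivAt x' (x'' t) t)
    (hx''c : ContinuousOn x'' (Set.Ici t₀))
    (hode : ∀ t ∈ Set.Ici t₀, x'' t + (α / t ^ θ) • x' t + gradient F (x t) = 0)
    (hH1 : ∀ y : EuclideanSpace ℝ (Fin n),
      F y - Fstar ≤ (1 / γ₁) * ⟪gradient F y, y - xstar⟫)
    (a b c E H : ℝ → ℝ)
    (ha : ∀ t, a t = t * (F (x t) - Fstar))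
    (hb : ∀ t, b t = (1 / (2 * t)) * ‖lam • (x t - xstar) + t • x' t‖ ^ 2)
    (hc : ∀ t, c t = (1 / (2 * t)) * ‖x t - xstar‖ ^ 2)
    (hE : ∀ t, E t = t * (a t + b t + (lam * (lam + 1 - α * t ^ (1 - θ))) * c t))
    (hH : ∀ t, H t = t ^ p * E t) :
    ∀ t ∈ Set.Ici t₀, ∀ d : ℝ, HasDerivAt H d t →
      d ≤ t ^ p * ((2 + p - γ₁ * lam) * a t +
        (2 * lam + 2 + p - 2 * α * t ^ (1 - θ)) * b t +
        lam * ((lam + 1) * (p - 2 * lam) - α * (p + 1 - θ - 2 * lam) * t ^ (1 - θ)) * c t) :=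
  stmt_17_general F Fstar hdiff xstar α t₀ θ γ₁ lam p ht₀ hγ₁ hlam x x' x'' hx hx'd hode hH1 a b c E
    H ha hb hc hE hH
end

section
/- Let t₀ > 0, θ ∈ [0,1], r = (1 + θ)/2 and γ₂ > 2, and set p₂ = 4r/(γ₂ − 2). Let x : [t₀, ∞) → ℝⁿ be any curve, let x* be the unique minimizer of F, and define a(t) = t(F(x(t)) − F*) and c(t) = (1/(2t))‖x(t) − x*‖². Suppose F satisfies the global growth condition K‖y − x*‖^{γ₂} ≤ F(y) − F* for all y ∈ ℝⁿ, for some K > 0. Then for every m ∈ ℝ there exists M ∈ ℝ such that for all t ≥ t₀: m·t^{p₂+1}·c(t) − t^{p₂+2r−1}·a(t) ≤ M. -/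
/-! Rescale the distance to the minimizer as `s = t^(p₂/2) ‖x(t) - x*‖`. The choice of `p₂` is exactly
what makes `p₂ γ₂ / 2 = p₂ + 2r`, so the first term becomes `(m/2) s²` while, by the growth
condition, the subtracted term is at least `K s^γ₂`. Since `γ₂ > 2`, `(m/2) s² - K s^γ₂` is bounded
above on `s ≥ 0`, uniformly in `t`. -/

lemma exists_forall_mul_sq_sub_mul_rpow_le {K γ : ℝ} (hK : 0 < K) (hγ : 2 < γ) (m : ℝ) :
    ∃ M : ℝ, ∀ s : ℝ, 0 ≤ s → m * s ^ 2 - K * s ^ γ ≤ M := by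
  -- beyond `S` the power `K s^γ` dominates `|m| s²`
  set S : ℝ := (|m| / K) ^ (γ - 2)⁻¹
  have hS : 0 ≤ S := by positivity
  refine ⟨|m| * S ^ 2, fun s hs => ?_⟩
  have hms : m * s ^ 2 ≤ |m| * s ^ 2 := by gcongr; exact le_abs_self m
  have hKs : 0 ≤ K * s ^ γ := by positivity
  rcases le_total s S with hsS | hSs
  · calc m * s ^ 2 - K * s ^ γ ≤ |m| * s ^ 2 := by linarith
      _ ≤ |m| * S ^ 2 := by gcongr
  · have hm : |m| ≤ K * s ^ (γ - 2) := by
      rw [← div_le_iff₀' hK]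
      calc |m| / K = S ^ (γ - 2) := (Real.rpow_inv_rpow (by positivity) (by linarith)).symm
        _ ≤ s ^ (γ - 2) := by gcongr
    have hsplit : s ^ γ = s ^ (γ - 2) * s ^ 2 := by
      rw [← Real.rpow_two, ← Real.rpow_add' hs (by linarith), sub_add_cancel]
    have : m * s ^ 2 ≤ K * s ^ γ := by
      calc m * s ^ 2 ≤ |m| * s ^ 2 := hms
        _ ≤ K * s ^ (γ - 2) * s ^ 2 := by gcongr
        _ = K * s ^ γ := by rw [hsplit, mul_assoc]
    nlinarith [sq_nonneg S, abs_nonneg m]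

lemma rpow_half_mul_sq {t : ℝ} (ht : 0 ≤ t) (p u : ℝ) :
    (t ^ (p / 2) * u) ^ 2 = t ^ p * u ^ 2 := by
  rw [mul_pow, ← Real.rpow_natCast, ← Real.rpow_mul ht]
  norm_num

lemma div_sub_two_div_two_mul_self {γ : ℝ} (hγ : γ ≠ 2) (r : ℝ) :
    4 * r / (γ - 2) / 2 * γ = 4 * r / (γ - 2) + 2 * r := by
  have : γ - 2 ≠ 0 := sub_ne_zero.mpr hγ
  field_simp
  ring

theorem stmt_19_general
    {n : ℕ}
    (F : EuclideanSpace ℝ (Fin n) → ℝ) (Fstar : ℝ)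
    (xstar : EuclideanSpace ℝ (Fin n))
    (t₀ γ₂ r p₂ : ℝ) (ht₀ : 0 < t₀) (hγ₂ : 2 < γ₂)
    (hp₂ : p₂ = 4 * r / (γ₂ - 2))
    (x : ℝ → EuclideanSpace ℝ (Fin n))
    (K : ℝ) (hK : 0 < K)
    (hgrowth : ∀ y : EuclideanSpace ℝ (Fin n), K * ‖y - xstar‖ ^ γ₂ ≤ F y - Fstar)
    (a c : ℝ → ℝ)
    (ha : ∀ t, a t = t * (F (x t) - Fstar))
    (hc : ∀ t, c t = (1 / (2 * t)) * ‖x t - xstar‖ ^ 2)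
    :
    ∀ m : ℝ, ∃ M : ℝ, ∀ t ≥ t₀,
      m * (t ^ (p₂ + 1) * c t) - t ^ (p₂ + 2 * r - 1) * a t ≤ M := by
  intro m
  obtain ⟨M, hM⟩ := exists_forall_mul_sq_sub_mul_rpow_le hK hγ₂ (m / 2)
  refine ⟨M, fun t ht => ?_⟩
  have ht0 : 0 < t := ht₀.trans_le ht
  set s := t ^ (p₂ / 2) * ‖x t - xstar‖
  have hfirst : m * (t ^ (p₂ + 1) * c t) = m / 2 * s ^ 2 := by
    rw [hc, rpow_half_mul_sq ht0.le, Real.rpow_add ht0, Real.rpow_one]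
    field_simp
  have hsecond : t ^ (p₂ + 2 * r - 1) * a t = t ^ (p₂ + 2 * r) * (F (x t) - Fstar) := by
    rw [ha, sub_eq_add_neg, Real.rpow_add ht0, Real.rpow_neg_one]
    field_simp
  have hgrowth_s : K * s ^ γ₂ ≤ t ^ (p₂ + 2 * r) * (F (x t) - Fstar) := by
    rw [Real.mul_rpow (by positivity) (norm_nonneg _), ← Real.rpow_mul ht0.le, hp₂,
      div_sub_two_div_two_mul_self hγ₂.ne', ← hp₂, mul_left_comm]
    exact mul_le_mul_of_nonneg_left (hgrowth (x t)) (by positivity)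
  linarith [hM s (by positivity)]

theorem stmt_19
    {n : ℕ} (hn : 1 ≤ n)
    (F : EuclideanSpace ℝ (Fin n) → ℝ) (Fstar : ℝ)
    (hconv : ConvexOn ℝ Set.univ F)
    (hdiff : Differentiable ℝ F)
    (xstar : EuclideanSpace ℝ (Fin n)) (hmin : ∀ y, F xstar ≤ F y)
    (huniq : ∀ y, (∀ z, F y ≤ F z) → y = xstar)
    (hFstar : F xstar = Fstar)
    (t₀ θ γ₂ r p₂ : ℝ) (ht₀ : 0 < t₀) (hθ : 0 ≤ θ) (hθ1 : θ ≤ 1) (hγ₂ : 2 < γ₂)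
    (hr : r = (1 + θ) / 2) (hp₂ : p₂ = 4 * r / (γ₂ - 2))
    (x : ℝ → EuclideanSpace ℝ (Fin n))
    (K : ℝ) (hK : 0 < K)
    (hgrowth : ∀ y : EuclideanSpace ℝ (Fin n), K * ‖y - xstar‖ ^ γ₂ ≤ F y - Fstar)
    (a c : ℝ → ℝ)
    (ha : ∀ t, a t = t * (F (x t) - Fstar))
    (hc : ∀ t, c t = (1 / (2 * t)) * ‖x t - xstar‖ ^ 2)
    :
    ∀ m : ℝ, ∃ M : ℝ, ∀ t ≥ t₀,
      m * (t ^ (p₂ + 1) * c t) - t ^ (p₂ + 2 * r - 1) * a t ≤ M :=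
  stmt_19_general F Fstar xstar t₀ γ₂ r p₂ ht₀ hγ₂ hp₂ x K hK hgrowth a c ha hc
end
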